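/- Let N ≥ 1 and let U ∈ ℂ^{N×N} be unitary with columns u_1, …, u_N satisfying u_1 = (1/√N)·𝟏 and u_k = conj(u_{N+2−k}) for k = 2, …, ⌊N/2⌋+1. Let a ∈ ℂ^N with a_1 = 1. Then H_a = U·diag(a)·U⁻¹ is a normal atomic filter if and only if a_k = e^{-iθ_k} for k = 1, …, N, where θ_1, …, θ_N are pairwise distinct numbers in [0, 2π) satisfying θ_1 = 0 and θ_{N+2−k} + θ_k = 2π for k = 2, …, ⌊N/2⌋+1. Moreover, such an H_a is additionally periodic (H_a^N = I) if and only if these conditions hold together with {θ_1, …, θ_N} = {2π(k−1)/N : k = 1, …, N}. -/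

import Mathlib

/-! Conjugation by the unitary `U` is a ⋆-algebra automorphism, so `H_a ^ N = 1` iff every
`a k ^ N = 1`. The column conditions say that entrywise conjugation permutes the columns of `U`
by the involution `k ↦ -k` of `Fin N`, so the conjugate of `H_a` is `H_b` with
`b k = conj (a (-k))`, and `H_a` is real iff `conj (a (-k)) = a k`. Writing the unimodular
`a k` as `e^{-iθ_k}` with `θ_k ∈ [0, 2π)`, this says `θ_{-k} + θ_k ≡ 0 (mod 2π)`, which forces the
sum to be `2π` because `θ_k ≠ θ_0 = 0` for `k ≠ 0`. Finally `a k ^ N = 1` puts each `θ_k` on the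
grid `2πℤ/N ∩ [0, 2π)` of `N` points, which the `N` distinct angles must fill. -/

open Matrix Function Set Real

section ConjDiagonal

variable {ι R : Type*} [Fintype ι] [DecidableEq ι] [CommRing R] [StarRing R]

lemma Matrix.mul_diagonal_mul_conjTranspose_apply (U : Matrix ι ι R) (a : ι → R) (i j : ι) :
    (U * diagonal a * Uᴴ) i j = ∑ k, U i k * a k * star (U j k) := by
  rw [mul_apply]
  simp only [mul_diagonal, conjTranspose_apply]

lemma Matrix.map_star_mul_diagonal_mul_conjTranspose {U : Matrix ι ι R} {σ : ι → ι}
    (hσ : Involutive σ) (hU : ∀ i k, star (U i k) = U i (σ k)) (a : ι → R) :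
    (U * diagonal a * Uᴴ).map star = U * diagonal (fun k => star (a (σ k))) * Uᴴ := by
  ext i j
  rw [map_apply, mul_diagonal_mul_conjTranspose_apply, mul_diagonal_mul_conjTranspose_apply,
    star_sum]
  refine Fintype.sum_equiv (hσ.toPerm σ) _ _ fun k => ?_
  simp only [Involutive.coe_toPerm, star_mul', hU, hσ k]

lemma Matrix.conj_diagonal_injective {U : Matrix ι ι R} (hU : U ∈ unitaryGroup ι R) :
    Injective fun a : ι → R => U * diagonal a * Uᴴ :=
  (Unitary.conjStarAlgAut R _ ⟨U, hU⟩).injective.comp diagonal_injective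

lemma Matrix.map_star_conj_diagonal_eq_self_iff {U : Matrix ι ι R} (hU : U ∈ unitaryGroup ι R)
    {σ : ι → ι} (hσ : Involutive σ) (hcol : ∀ i k, star (U i k) = U i (σ k)) (a : ι → R) :
    (U * diagonal a * Uᴴ).map star = U * diagonal a * Uᴴ ↔ ∀ k, star (a (σ k)) = a k := by
  rw [map_star_mul_diagonal_mul_conjTranspose hσ hcol, (conj_diagonal_injective hU).eq_iff,
    funext_iff]

lemma Matrix.conj_diagonal_pow_eq_one_iff {U : Matrix ι ι R} (hU : U ∈ unitaryGroup ι R)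
    (a : ι → R) (n : ℕ) : (U * diagonal a * Uᴴ) ^ n = 1 ↔ ∀ k, a k ^ n = 1 := by
  let φ := Unitary.conjStarAlgAut R (Matrix ι ι R) ⟨U, hU⟩
  have hpow : (U * diagonal a * Uᴴ) ^ n = φ (diagonal (a ^ n)) := by
    rw [← diagonal_pow, map_pow]; rfl
  rw [hpow, EmbeddingLike.map_eq_one_iff, ← diagonal_one, diagonal_injective.eq_iff, funext_iff]
  rfl

end ConjDiagonal

lemma Matrix.map_star_eq_self_iff_forall_im_eq_zero {m n : Type*} (H : Matrix m n ℂ) :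
    H.map star = H ↔ ∀ i j, (H i j).im = 0 := by
  simp only [← Matrix.ext_iff, map_apply, Complex.star_def, Complex.conj_eq_iff_im]

namespace Fin

variable {N : ℕ} [NeZero N]

lemma mk_sub_eq_neg {k : Fin N} (hk : k ≠ 0) (h : N - k < N) : (⟨N - k, h⟩ : Fin N) = -k := by
  ext; simp [val_neg, hk]

lemma forall_le_half_iff {P : Fin N → Fin N → Prop} (hP : ∀ j k, P j k → P k j) :
    (∀ (k : Fin N) (hk : 1 ≤ (k : ℕ)) (_ : (k : ℕ) ≤ N / 2),
      P k ⟨N - k, Nat.sub_lt (NeZero.pos N) hk⟩) ↔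
      ∀ k ≠ 0, P k (-k) := by
  have one_le_iff (k : Fin N) : 1 ≤ (k : ℕ) ↔ k ≠ 0 := by
    rw [Nat.one_le_iff_ne_zero, Fin.val_ne_zero_iff]
  constructor
  · intro h k hk
    by_cases hle : (k : ℕ) ≤ N / 2
    · rw [← mk_sub_eq_neg hk]
      exact h k ((one_le_iff k).mpr hk) hle
    · have hk' : -k ≠ 0 := neg_ne_zero.mpr hk
      have hval : ((-k : Fin N) : ℕ) = N - k := by simp [val_neg, hk]
      have := h (-k) ((one_le_iff _).mpr hk') (by omega)
      rw [mk_sub_eq_neg hk', neg_neg] at this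
      exact hP _ _ this
  · intro h k hk1 _
    rw [mk_sub_eq_neg ((one_le_iff k).mp hk1)]
    exact h k ((one_le_iff k).mp hk1)

end Fin

namespace Complex

lemma exp_neg_ofReal_mul_I (θ : ℝ) : exp (-(θ : ℂ) * I) = Circle.exp (-θ) := by
  rw [Circle.coe_exp, ofReal_neg]

lemma exists_mem_Ico_exp_neg_ofReal_mul_I_eq {z : ℂ} (hz : ‖z‖ = 1) :
    ∃ θ ∈ Ico 0 (2 * π), exp (-(θ : ℂ) * I) = z := by
  let w : Circle := ⟨z, mem_sphere_zero_iff_norm.mpr hz⟩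
  let n := toIcoDiv two_pi_pos 0 (-z.arg)
  refine ⟨toIcoMod two_pi_pos 0 (-z.arg), by simpa using toIcoMod_mem_Ico two_pi_pos 0 (-z.arg), ?_⟩
  have hmod : -toIcoMod two_pi_pos 0 (-z.arg) = z.arg + n * (2 * π) := by
    rw [toIcoMod, zsmul_eq_mul]; ring
  rw [exp_neg_ofReal_mul_I, hmod, Circle.periodic_exp.int_mul n]
  exact congrArg Subtype.val (Circle.exp_arg w)

lemma injOn_exp_neg_ofReal_mul_I : InjOn (fun θ : ℝ => exp (-(θ : ℂ) * I)) (Ico 0 (2 * π)) := by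
  intro x hx y hy hxy
  simp only [exp_neg_ofReal_mul_I, Circle.coe_inj] at hxy
  have hinj : InjOn Circle.exp (Ioc (-(2 * π)) 0) := Circle.exp_injOn_Ioc (by ring_nf; rfl)
  have := hinj ⟨by linarith [hx.2], by linarith [hx.1]⟩ ⟨by linarith [hy.2], by linarith [hy.1]⟩ hxy
  linarith

lemma star_exp_neg_ofReal_mul_I_eq_iff {x y : ℝ} (hx : x ∈ Ioc 0 (2 * π))
    (hy : y ∈ Ico 0 (2 * π)) :
    star (exp (-(x : ℂ) * I)) = exp (-(y : ℂ) * I) ↔ x + y = 2 * π := by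
  have hstar : star (exp (-(x : ℂ) * I)) = Circle.exp x := by
    rw [exp_neg_ofReal_mul_I, Circle.exp_neg, Circle.coe_inv_eq_conj, star_def, conj_conj]
  rw [hstar, exp_neg_ofReal_mul_I, ← Circle.exp_add_two_pi (-y), Circle.coe_inj,
    (Circle.exp_injOn_Ioc (a := 0) (b := 2 * π) (by simp)).eq_iff hx
      ⟨by linarith [hy.2], by linarith [hy.1]⟩]
  constructor <;> intro h <;> linarith

lemma exp_neg_ofReal_mul_I_pow_eq_one_iff {N : ℕ} (hN : N ≠ 0) {θ : ℝ}
    (hθ : θ ∈ Ico 0 (2 * π)) :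
    exp (-(θ : ℂ) * I) ^ N = 1 ↔ θ ∈ range fun k : Fin N => 2 * π * (k : ℕ) / N := by
  have hNpos : (0 : ℝ) < N := by positivity
  rw [exp_neg_ofReal_mul_I, ← Circle.coe_pow, ← Circle.exp_natCast_mul, Circle.coe_eq_one,
    Circle.exp_eq_one]
  constructor
  · rintro ⟨n, hn⟩
    have hbounds : 0 ≤ (-n : ℝ) ∧ (-n : ℝ) < N := by
      constructor <;> nlinarith [hθ.1, hθ.2, pi_pos]
    have hm : 0 ≤ -n ∧ -n < N := by exact_mod_cast hbounds
    refine ⟨⟨(-n).toNat, by omega⟩, ?_⟩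
    have hcast : (((-n).toNat : ℕ) : ℝ) = -n := by exact_mod_cast Int.toNat_of_nonneg hm.1
    simp only [hcast]
    field_simp
    linarith
  · rintro ⟨k, rfl⟩
    exact ⟨-(k : ℕ), by push_cast; field_simp⟩

end Complex

lemma Set.range_eq_of_injective_of_range_subset {ι α : Type*} [Finite ι] {f g : ι → α}
    (hf : Injective f) (h : range f ⊆ range g) : range f = range g := by
  obtain ⟨τ, rfl⟩ := range_subset_range_iff_exists_comp.mp h
  exact (Finite.injective_iff_surjective.mp hf.of_comp).range_comp g

section Angles

open Complex

variable {N : ℕ} [NeZero N]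

theorem exists_angles_iff {a : Fin N → ℂ} (ha0 : a 0 = 1) :
    (Injective a ∧ (∀ k, ‖a k‖ = 1) ∧ ∀ k, star (a (-k)) = a k) ↔
      ∃ θ : Fin N → ℝ, Injective θ ∧ (∀ k, θ k ∈ Ico 0 (2 * π)) ∧ θ 0 = 0 ∧
        (∀ k ≠ 0, θ (-k) + θ k = 2 * π) ∧ ∀ k, a k = exp (-(θ k : ℂ) * I) := by
  have hpos {θ : Fin N → ℝ} (hinj : Injective θ) (hθ : ∀ k, θ k ∈ Ico 0 (2 * π)) (h0 : θ 0 = 0)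
      {k : Fin N} (hk : k ≠ 0) : θ k ∈ Ioc 0 (2 * π) :=
    ⟨(hθ k).1.lt_of_ne (h0 ▸ hinj.ne hk.symm), (hθ k).2.le⟩
  constructor
  · rintro ⟨hinj, hnorm, hstar⟩
    choose θ hθ hθa using fun k => exists_mem_Ico_exp_neg_ofReal_mul_I_eq (hnorm k)
    have hθinj : Injective θ := fun j k h => hinj (by rw [← hθa j, ← hθa k, h])
    have hθ0 : θ 0 = 0 :=
      injOn_exp_neg_ofReal_mul_I (hθ 0) ⟨le_rfl, two_pi_pos⟩ <| by
        dsimp only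
        rw [hθa, ha0, ofReal_zero, neg_zero, zero_mul, Complex.exp_zero]
    refine ⟨θ, hθinj, hθ, hθ0, fun k hk => ?_, fun k => (hθa k).symm⟩
    rw [← star_exp_neg_ofReal_mul_I_eq_iff (hpos hθinj hθ hθ0 (neg_ne_zero.mpr hk)) (hθ k),
      hθa, hθa]
    exact hstar k
  · rintro ⟨θ, hθinj, hθ, hθ0, hsum, hθa⟩
    refine ⟨fun j k h => hθinj (injOn_exp_neg_ofReal_mul_I (hθ j) (hθ k) ?_), fun k => ?_,
      fun k => ?_⟩
    · simpa only [hθa] using h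
    · rw [hθa, exp_neg_ofReal_mul_I]
      exact Circle.norm_coe _
    · rcases eq_or_ne k 0 with rfl | hk
      · rw [neg_zero, ha0, star_one]
      · rw [hθa, hθa,
          star_exp_neg_ofReal_mul_I_eq_iff (hpos hθinj hθ hθ0 (neg_ne_zero.mpr hk)) (hθ k)]
        exact hsum k hk

theorem exists_angles_range_iff {a : Fin N → ℂ} (ha0 : a 0 = 1) :
    (Injective a ∧ (∀ k, ‖a k‖ = 1) ∧ (∀ k, star (a (-k)) = a k) ∧ ∀ k, a k ^ N = 1) ↔
      ∃ θ : Fin N → ℝ, Injective θ ∧ (∀ k, θ k ∈ Ico 0 (2 * π)) ∧ θ 0 = 0 ∧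
        (∀ k ≠ 0, θ (-k) + θ k = 2 * π) ∧ (∀ k, a k = exp (-(θ k : ℂ) * I)) ∧
        range θ = range fun k : Fin N => 2 * π * (k : ℕ) / N := by
  have hroots {θ : Fin N → ℝ} (hθ : ∀ k, θ k ∈ Ico 0 (2 * π))
      (hθa : ∀ k, a k = exp (-(θ k : ℂ) * I)) :
      (∀ k, a k ^ N = 1) ↔ range θ ⊆ range fun k : Fin N => 2 * π * (k : ℕ) / N := by
    simp only [range_subset_iff, hθa,
      fun k => exp_neg_ofReal_mul_I_pow_eq_one_iff (NeZero.ne N) (hθ k)]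
  constructor
  · rintro ⟨hinj, hnorm, hstar, hpow⟩
    obtain ⟨θ, hθinj, hθ, hθ0, hsum, hθa⟩ := (exists_angles_iff ha0).mp ⟨hinj, hnorm, hstar⟩
    exact ⟨θ, hθinj, hθ, hθ0, hsum, hθa,
      range_eq_of_injective_of_range_subset hθinj ((hroots hθ hθa).mp hpow)⟩
  · rintro ⟨θ, hθinj, hθ, hθ0, hsum, hθa, hrange⟩
    obtain ⟨hinj, hnorm, hstar⟩ := (exists_angles_iff ha0).mpr ⟨θ, hθinj, hθ, hθ0, hsum, hθa⟩
    exact ⟨hinj, hnorm, hstar, (hroots hθ hθa).mpr hrange.subset⟩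

end Angles

/-- For `U` unitary with first column `(1/√N)·𝟏` and
`u_k = conj (u_{N+2-k})` for `k = 2, …, ⌊N/2⌋+1` (1-based; 0-based below), and `a` with
`a_1 = 1`: `H_a = U * diagonal a * U⁻¹` is a normal atomic filter iff
`a_k = e^{-iθ_k}` for pairwise distinct `θ_k ∈ [0, 2π)` with `θ_1 = 0` and
`θ_{N+2-k} + θ_k = 2π` for `k = 2, …, ⌊N/2⌋+1`. Moreover `H_a` is a normal atomic
filter that is additionally periodic (`H_a ^ N = 1`) iff furthermore
`{θ_1, …, θ_N} = {2π(k-1)/N : k = 1, …, N}`. -/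
theorem normal_atomic_filter_characterization (N : ℕ) (hN : 1 ≤ N)
    (U : Matrix (Fin N) (Fin N) ℂ) (hU : U ∈ Matrix.unitaryGroup (Fin N) ℂ)
    (hu1 : ∀ n, U n ⟨0, hN⟩ = (Real.sqrt N : ℂ)⁻¹)
    (hsymm : ∀ (k : Fin N) (hk1 : 1 ≤ (k : ℕ)) (hk2 : (k : ℕ) ≤ N / 2),
      ∀ n, U n k = star (U n ⟨N - (k : ℕ), by omega⟩))
    (a : Fin N → ℂ) (ha1 : a ⟨0, hN⟩ = 1) :
    ((Function.Injective a ∧ (∀ k, ‖a k‖ = 1) ∧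
        (∀ i j, ((U * Matrix.diagonal a * U⁻¹) i j).im = 0)) ↔
      (∃ θ : Fin N → ℝ, Function.Injective θ ∧
        (∀ k, θ k ∈ Set.Ico (0 : ℝ) (2 * Real.pi)) ∧
        θ ⟨0, hN⟩ = 0 ∧
        (∀ (k : Fin N) (hk1 : 1 ≤ (k : ℕ)) (hk2 : (k : ℕ) ≤ N / 2),
          θ ⟨N - (k : ℕ), by omega⟩ + θ k = 2 * Real.pi) ∧
        (∀ k, a k = Complex.exp (-(θ k : ℂ) * Complex.I)))) ∧
    ((Function.Injective a ∧ (∀ k, ‖a k‖ = 1) ∧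
        (∀ i j, ((U * Matrix.diagonal a * U⁻¹) i j).im = 0) ∧
        (U * Matrix.diagonal a * U⁻¹) ^ N = 1) ↔
      (∃ θ : Fin N → ℝ, Function.Injective θ ∧
        (∀ k, θ k ∈ Set.Ico (0 : ℝ) (2 * Real.pi)) ∧
        θ ⟨0, hN⟩ = 0 ∧
        (∀ (k : Fin N) (hk1 : 1 ≤ (k : ℕ)) (hk2 : (k : ℕ) ≤ N / 2),
          θ ⟨N - (k : ℕ), by omega⟩ + θ k = 2 * Real.pi) ∧
        (∀ k, a k = Complex.exp (-(θ k : ℂ) * Complex.I)) ∧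
        Set.range θ = Set.range (fun k : Fin N => 2 * Real.pi * (k : ℕ) / N))) := by
  have : NeZero N := ⟨by omega⟩
  have hUinv : U⁻¹ = Uᴴ := inv_eq_left_inv hU.1
  have hcol : ∀ n k, star (U n k) = U n (-k) := by
    have hsymm' := (Fin.forall_le_half_iff (P := fun k j => ∀ n, U n k = star (U n j))
      fun j k h n => by rw [h n, star_star]).mp hsymm
    have hu0 : ∀ n, U n 0 = (Real.sqrt N : ℂ)⁻¹ := hu1
    intro n k
    rcases eq_or_ne k 0 with rfl | hk
    · rw [neg_zero, hu0 n, ← Complex.ofReal_inv, Complex.star_def, Complex.conj_ofReal]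
    · rw [hsymm' k hk n, star_star]
  have hreal : (∀ i j, ((U * diagonal a * Uᴴ) i j).im = 0) ↔ ∀ k, star (a (-k)) = a k := by
    rw [← map_star_eq_self_iff_forall_im_eq_zero,
      map_star_conj_diagonal_eq_self_iff hU neg_involutive hcol]
  have hhalf (θ : Fin N → ℝ) : (∀ (k : Fin N) (_ : 1 ≤ (k : ℕ)) (_ : (k : ℕ) ≤ N / 2),
      θ ⟨N - (k : ℕ), by omega⟩ + θ k = 2 * π) ↔ ∀ k ≠ 0, θ (-k) + θ k = 2 * π :=
    Fin.forall_le_half_iff (P := fun k j => θ j + θ k = 2 * π) fun j k h => by linarith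
  simp only [hUinv, hreal, conj_diagonal_pow_eq_one_iff hU, hhalf]
  exact ⟨exists_angles_iff ha1, exists_angles_range_iff ha1⟩
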